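/- Let (X,d,μ) be a connected, complete, locally compact, separable geodesic metric measure space satisfying (VD_loc), let G⊆X be a maximal 1-separated set with graph structure x∼y iff x≠y and d(x,y)≤3 and weights ν_{xy}=μ(A_{xy}), ν_x=Σ_yν_{xy}. Then there is c₁>0, depending only on the constant in (VD_loc), such that for every nonnegative f:G→ℝ, every A⊆G, and A'={y∈G: d_G(y,A)≤4}: Σ_{z∈A} V₄f(z)²·ν_z ≤ c₁·Σ_{y,z∈A'} (f(y)−f(z))²·ν_{yz}. -/

import Mathlib

open MeasureTheory
open scoped Classical ENNReal

noncomputable section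

/-- A metric space is geodesic if any two points are joined by an isometrically
parametrized path. -/
def IsGeodesicSpace (X : Type*) [MetricSpace X] : Prop :=
  ∀ x y : X, ∃ γ : ℝ → X, γ 0 = x ∧ γ (dist x y) = y ∧
    ∀ s ∈ Set.Icc (0 : ℝ) (dist x y), ∀ t ∈ Set.Icc (0 : ℝ) (dist x y),
      dist (γ s) (γ t) = |s - t|

/-- `G` is a maximal 1-separated subset of `X`. -/
def MaximalSeparated {X : Type*} [MetricSpace X] (G : Set X) : Prop :=
  (∀ x ∈ G, ∀ y ∈ G, x ≠ y → 1 ≤ dist x y) ∧ ∀ z : X, ∃ x ∈ G, dist z x < 1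

/-- The net graph on `G ⊆ X`: vertices are points of `G`, with `x ∼ y` iff `x ≠ y`
and `d(x,y) ≤ 3`. -/
def netGraph {X : Type*} [MetricSpace X] (G : Set X) : SimpleGraph G where
  Adj x y := x ≠ y ∧ dist (x : X) (y : X) ≤ 3
  symm := ⟨fun x y h => ⟨h.1.symm, by rw [dist_comm]; exact h.2⟩⟩
  loopless := ⟨fun x h => h.1 rfl⟩

/-- The edge weight `ν_{xy} = μ(A_{xy})` where `A_{xy} = B(z_{xy},5/2)` and `z_{xy}`
is the chosen midpoint of a geodesic from `x` to `y`; zero for non-adjacent pairs. -/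
def netNuE {X : Type*} [MetricSpace X] [MeasurableSpace X] (μ : Measure X)
    (G : Set X) (z : X → X → X) (x y : G) : ℝ≥0∞ :=
  if (netGraph G).Adj x y then μ (Metric.ball (z (x : X) (y : X)) (5 / 2)) else 0

/-- The vertex weight `ν_x = Σ_{y ∼ x} ν_{xy}`. -/
def netNuV {X : Type*} [MetricSpace X] [MeasurableSpace X] (μ : Measure X)
    (G : Set X) (z : X → X → X) (x : G) : ℝ≥0∞ :=
  ∑' y : G, netNuE μ G z x y

/-- `A_x = ⋃_{y ∼ x} A_{xy}`. -/
def netA {X : Type*} [MetricSpace X] (G : Set X) (z : X → X → X) (x : G) : Set X :=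
  ⋃ y ∈ (netGraph G).neighborSet x, Metric.ball (z (x : X) (y : X)) (5 / 2)

/-- `f̃ = Σ_{x ∈ G} f(x) ψ_x`, the transfer of `f : G → ℝ` to `X` via the partition
of unity `ψ`. -/
def netTilde {X : Type*} [MetricSpace X] (G : Set X) (ψ : G → X → ℝ)
    (f : G → ℝ) (w : X) : ℝ :=
  ∑' x : G, f x * ψ x w

/-- `V_k f(x) = sup {|f(x) - f(z)| : d_G(z,x) ≤ k}`. -/
def netV {X : Type*} [MetricSpace X] (G : Set X) (k : ℕ) (f : G → ℝ) (x : G) : ℝ :=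
  ⨆ y : {y : G // (netGraph G).dist x y ≤ k}, |f x - f (y : G)|

end


/-!
Let `V₄f(w) = |f w - f y|` and let `w = a₀ ∼ a₁ ∼ ⋯ ∼ aₘ = y`, `m ≤ 4`, be a shortest path in the
net graph. Some increment satisfies `|f w - f y| ≤ 4 |f aᵢ - f aᵢ₊₁|`, so `V₄f(w)² ν_w` can be
charged to the single edge `aᵢaᵢ₊₁`. The weights are comparable, `ν_w ≲ μ(B(w,4)) ≲ ν_{aᵢaᵢ₊₁}`,
because in a geodesic space local doubling propagates along geodesics: small balls at distance
`D` have comparable measure, every separated set meets a ball of radius `R` in boundedly many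
points (by induction on `R`, pulling points back along geodesics towards the centre), and hence
`μ(B(x,R)) ≲ μ(B(x,r))` uniformly in `x`. Finally an edge is charged by at most as many `w` as
a graph ball of radius 4 contains, which is again uniformly bounded.
-/

open MeasureTheory Metric Set Function
open scoped ENNReal NNReal

theorem ENNReal.tsum_comp_le_mul_tsum {α β : Type*} (e : α → β) (t : β → ℝ≥0∞) {N : ℝ≥0∞}
    (he : ∀ b, ((e ⁻¹' {b}).encard : ℝ≥0∞) ≤ N) : ∑' a, t (e a) ≤ N * ∑' b, t b := by
  rw [← ENNReal.tsum_fiberwise (fun a => t (e a)) e, ← ENNReal.tsum_mul_left]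
  refine ENNReal.tsum_le_tsum fun b => ?_
  calc ∑' a : e ⁻¹' {b}, t (e a) = ∑' _ : e ⁻¹' {b}, t b := tsum_congr fun a => by rw [a.2]
    _ = (e ⁻¹' {b}).encard * t b := ENNReal.tsum_set_const _ _
    _ ≤ N * t b := mul_le_mul_left (he b) _

theorem Set.finite_of_toENNReal_encard_le {α : Type*} {s : Set α} {N : ℝ≥0}
    (h : (s.encard : ℝ≥0∞) ≤ N) : s.Finite :=
  encard_ne_top_iff.1 <| ENat.toENNReal_ne_top.1 (h.trans_lt ENNReal.coe_lt_top).ne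

theorem Set.toENNReal_encard_le_of_mapsTo_val {α : Type*} {T : Set α} {s : Set T} {t : Set α}
    (h : MapsTo Subtype.val s t) : (s.encard : ℝ≥0∞) ≤ t.encard :=
  ENat.toENNReal_le.2 (encard_le_encard_of_injOn h Subtype.val_injective.injOn)

theorem SimpleGraph.Walk.dist_le_length_of_mem_support {V : Type*} {Γ : SimpleGraph V}
    {u v x : V} (p : Γ.Walk u v) (hx : x ∈ p.support) : Γ.dist u x ≤ p.length :=
  (SimpleGraph.dist_le _).trans (p.length_takeUntil_le_length hx)

theorem SimpleGraph.Walk.exists_mem_darts_abs_sub_le {V : Type*} {Γ : SimpleGraph V}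
    (f : V → ℝ) {u v : V} (p : Γ.Walk u v) (huv : u ≠ v) :
    ∃ d ∈ p.darts, |f u - f v| ≤ p.length * |f d.fst - f d.snd| := by
  induction p with
  | nil => exact absurd rfl huv
  | @cons u v w h p ih =>
    have htri := abs_sub_le (f u) (f v) (f w)
    simp only [darts_cons, List.mem_cons, length_cons, Nat.cast_succ]
    by_cases hvw : v = w
    · subst hvw
      refine ⟨⟨(u, v), h⟩, Or.inl rfl, ?_⟩
      nlinarith [abs_nonneg (f u - f v), (p.length.cast_nonneg : (0 : ℝ) ≤ p.length)]
    obtain ⟨d, hd, hle⟩ := ih hvw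
    by_cases hcmp : |f u - f v| ≤ |f d.fst - f d.snd|
    · exact ⟨d, Or.inr hd, by linarith⟩
    · refine ⟨⟨(u, v), h⟩, Or.inl rfl, ?_⟩
      nlinarith [(p.length.cast_nonneg : (0 : ℝ) ≤ p.length)]

section

variable {X : Type*} [MetricSpace X]

theorem Metric.IsSeparated.lt_dist {ε : ℝ≥0} {s : Set X} (hs : IsSeparated ε s) {a b : X}
    (ha : a ∈ s) (hb : b ∈ s) (hab : a ≠ b) : (ε : ℝ) < dist a b := by
  have : (ε : ℝ≥0∞) < edist a b := hs ha hb hab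
  rwa [edist_nndist, ENNReal.coe_lt_coe, ← NNReal.coe_lt_coe, coe_nndist] at this

theorem Metric.IsCover.exists_dist_le {ε : ℝ≥0} {s N : Set X} (h : IsCover ε s N) {x : X}
    (hx : x ∈ s) : ∃ y ∈ N, dist x y ≤ ε := by
  simpa using isCover_iff_subset_iUnion_closedBall.1 h hx

theorem Metric.IsSeparated.exists_superset_isCover {ε : ℝ≥0} {s : Set X}
    (hs : IsSeparated ε s) : ∃ H, s ⊆ H ∧ IsSeparated ε H ∧ IsCover ε univ H := by
  obtain ⟨H, hsH, hmax⟩ := zorn_subset_nonempty {N : Set X | IsSeparated ε N}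
    (fun c hc hchain _ => ⟨⋃₀ c, (pairwise_sUnion hchain.directedOn).2 hc,
      fun _ => subset_sUnion_of_mem⟩) s hs
  refine ⟨H, hsH, hmax.prop, IsCover.of_maximal_isSeparated ?_⟩
  exact ⟨⟨subset_univ H, hmax.prop⟩, fun N hN hHN => hmax.le_of_ge hN.2 hHN⟩

theorem IsGeodesicSpace.exists_dist_eq (hgeo : IsGeodesicSpace X) (x y : X) {t : ℝ}
    (ht₀ : 0 ≤ t) (ht : t ≤ dist x y) : ∃ m, dist x m = t ∧ dist m y = dist x y - t := by
  obtain ⟨γ, hγ₀, hγ₁, hγ⟩ := hgeo x y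
  have hd : 0 ≤ dist x y := dist_nonneg
  refine ⟨γ t, ?_, ?_⟩
  · rw [← hγ₀, hγ 0 ⟨le_rfl, hd⟩ t ⟨ht₀, ht⟩, zero_sub, abs_neg, abs_of_nonneg ht₀]
  · calc dist (γ t) y = dist (γ t) (γ (dist x y)) := by rw [hγ₁]
      _ = dist x y - t := by
        rw [hγ t ⟨ht₀, ht⟩ _ ⟨hd, le_rfl⟩, abs_of_nonpos (by linarith)]
        ring

theorem IsGeodesicSpace.exists_mem_dist_lt (hgeo : IsGeodesicSpace X) {δ : ℝ≥0} (hδ : 0 < δ)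
    {H : Set X} (hH : IsCover δ univ H) {R : ℝ} (hR : 2 * δ ≤ R) {p g : X} (hg : dist p g < R + δ) :
    ∃ q ∈ H, dist p q < R ∧ dist q g ≤ 3 * δ := by
  obtain ⟨m, hpm, hmg⟩ := hgeo.exists_dist_eq p g (t := max (dist p g - 2 * δ) 0)
    (le_max_right _ _) (max_le (by linarith [δ.2]) dist_nonneg)
  obtain ⟨q, hqH, hmq⟩ := hH.exists_dist_le (mem_univ m)
  have h₁ := le_max_left (dist p g - 2 * δ) 0
  have h₂ : max (dist p g - 2 * δ) 0 < R - δ :=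
    max_lt (by linarith) (by linarith [NNReal.coe_pos.2 hδ])
  refine ⟨q, hqH, ?_, ?_⟩
  · linarith [dist_triangle p m q]
  · linarith [dist_triangle q m g, dist_comm q m]

section NetGraph

variable {G : Set X}

theorem dist_le_three_mul_walk_length {x y : G} (w : (netGraph G).Walk x y) :
    dist (x : X) y ≤ 3 * w.length := by
  induction w with
  | nil => simp
  | @cons u v w h p ih =>
    rw [SimpleGraph.Walk.length_cons]
    push_cast
    linarith [dist_triangle (u : X) v w, h.2]

theorem exists_netGraph_adj_dist_lt (hgeo : IsGeodesicSpace X)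
    (hG : ∀ x : X, ∃ g ∈ G, dist x g < 1) {x y : G} (h : 3 < dist (x : X) y) :
    ∃ g : G, (netGraph G).Adj g y ∧ dist (x : X) g < dist (x : X) y - 1 := by
  obtain ⟨m, hxm, hmy⟩ := hgeo.exists_dist_eq x y (t := dist (x : X) y - 2) (by linarith)
    (by linarith)
  obtain ⟨g, hgG, hmg⟩ := hG m
  have hxg : dist (x : X) g < dist (x : X) y - 1 := by linarith [dist_triangle (x : X) m g]
  refine ⟨⟨g, hgG⟩, ⟨fun hgy => ?_, ?_⟩, hxg⟩
  · rw [← hgy] at hxg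
    linarith
  · show dist g (y : X) ≤ 3
    linarith [dist_triangle g m y, dist_comm g m]

theorem netGraph_preconnected (hgeo : IsGeodesicSpace X) (hG : ∀ x : X, ∃ g ∈ G, dist x g < 1) :
    (netGraph G).Preconnected := by
  have hnear : ∀ x y : G, dist (x : X) y ≤ 3 → (netGraph G).Reachable x y := fun x y h => by
    by_cases hxy : x = y
    · exact hxy ▸ SimpleGraph.Reachable.refl _
    · exact SimpleGraph.Adj.reachable ⟨hxy, h⟩
  have hfar : ∀ n : ℕ, ∀ x y : G, dist (x : X) y ≤ n + 3 → (netGraph G).Reachable x y := by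
    intro n
    induction n with
    | zero => exact fun x y h => hnear x y (by simpa using h)
    | succ n ih =>
      intro x y h
      by_cases h₃ : dist (x : X) y ≤ 3
      · exact hnear x y h₃
      obtain ⟨g, hgy, hxg⟩ := exists_netGraph_adj_dist_lt hgeo hG (not_le.1 h₃)
      exact (ih x g (by push_cast at h; linarith)).trans hgy.reachable
  exact fun x y => hfar ⌈dist (x : X) y⌉₊ x y (by linarith [Nat.le_ceil (dist (x : X) y)])

theorem dist_le_three_mul_netGraph_dist (hgeo : IsGeodesicSpace X)
    (hG : ∀ x : X, ∃ g ∈ G, dist x g < 1) (x y : G) :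
    dist (x : X) y ≤ 3 * (netGraph G).dist x y := by
  obtain ⟨w, hw⟩ := (netGraph_preconnected hgeo hG x y).exists_walk_length_eq_dist
  exact hw ▸ dist_le_three_mul_walk_length w

theorem MaximalSeparated.isSeparated (hG : MaximalSeparated G) : IsSeparated (1 / 2 : ℝ≥0) G :=
  fun a ha b hb hab => by
    show ((1 / 2 : ℝ≥0) : ℝ≥0∞) < edist a b
    rw [edist_nndist, ENNReal.coe_lt_coe, ← NNReal.coe_lt_coe, coe_nndist]
    push_cast
    linarith [hG.1 a ha b hb hab]

theorem exists_netV_eq (k : ℕ) (f : G → ℝ) (x : G)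
    (h : {y | (netGraph G).dist x y ≤ k}.Finite) :
    ∃ y, (netGraph G).dist x y ≤ k ∧ netV G k f x = |f x - f y| := by
  have : Finite {y : G // (netGraph G).dist x y ≤ k} := h.to_subtype
  have : Nonempty {y : G // (netGraph G).dist x y ≤ k} := ⟨⟨x, by simp⟩⟩
  obtain ⟨y, hy⟩ := exists_eq_ciSup_of_finite
    (f := fun y : {y : G // (netGraph G).dist x y ≤ k} => |f x - f y|)
  exact ⟨y, y.2, hy.symm⟩

end NetGraph

variable [MeasurableSpace X] {μ : Measure X} {L : ℝ≥0∞}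

def IsLocallyDoubling (μ : Measure X) (L : ℝ≥0∞) : Prop :=
  ∀ (x : X) (R : ℝ), 0 < R → R ≤ 1 → μ (ball x (2 * R)) ≤ L * μ (ball x R)

theorem IsLocallyDoubling.measure_ball_two_pow_mul_le (hdbl : IsLocallyDoubling μ L) (x : X)
    {r : ℝ} (hr : 0 < r) (n : ℕ) (hn : 2 ^ n * r ≤ 2) :
    μ (ball x (2 ^ n * r)) ≤ L ^ n * μ (ball x r) := by
  induction n with
  | zero => simp
  | succ n ih =>
    have h₁ : 2 ^ n * r ≤ 1 := by rw [pow_succ] at hn; linarith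
    calc μ (ball x (2 ^ (n + 1) * r)) = μ (ball x (2 * (2 ^ n * r))) := by ring_nf
      _ ≤ L * μ (ball x (2 ^ n * r)) := hdbl x _ (by positivity) h₁
      _ ≤ L * (L ^ n * μ (ball x r)) := by gcongr; exact ih (by linarith)
      _ = L ^ (n + 1) * μ (ball x r) := by ring

theorem IsLocallyDoubling.measure_ball_le_pow_mul (hdbl : IsLocallyDoubling μ L)
    (hgeo : IsGeodesicSpace X) {r : ℝ} (hr₀ : 0 < r) (hr₁ : r ≤ 1) (n : ℕ) {p q : X}
    (hpq : dist p q ≤ n * r) : μ (ball q r) ≤ L ^ n * μ (ball p r) := by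
  induction n generalizing q with
  | zero =>
    obtain rfl : p = q := dist_le_zero.1 (by simpa using hpq)
    simp
  | succ n ih =>
    obtain ⟨m, hpm, hmq⟩ := hgeo.exists_dist_eq p q (t := max (dist p q - r) 0)
      (le_max_right _ _) (max_le (by linarith) dist_nonneg)
    calc μ (ball q r) ≤ μ (ball m (2 * r)) := by
          refine measure_mono (ball_subset_ball' ?_)
          rw [dist_comm, hmq]
          linarith [le_max_left (dist p q - r) 0]
      _ ≤ L * μ (ball m r) := hdbl m r hr₀ hr₁
      _ ≤ L * (L ^ n * μ (ball p r)) := by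
          gcongr
          refine ih (hpm.le.trans (max_le ?_ (by positivity)))
          push_cast at hpq
          linarith
      _ = L ^ (n + 1) * μ (ball p r) := by ring

theorem netNuV_le_encard_mul {G : Set X} {z : X → X → X}
    (hz : ∀ x y : G, (netGraph G).Adj x y → dist (x : X) (z x y) = dist (x : X) y / 2) (w : G) :
    netNuV μ G z w ≤ ((netGraph G).neighborSet w).encard * μ (ball (w : X) 4) :=
  calc netNuV μ G z w
      = ∑' y, ((netGraph G).neighborSet w).indicator (fun y : G => μ (ball (z w y) (5 / 2))) y :=
        rfl
    _ = ∑' y : (netGraph G).neighborSet w, μ (ball (z w y) (5 / 2)) := (tsum_subtype _ _).symm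
    _ ≤ ∑' _ : (netGraph G).neighborSet w, μ (ball (w : X) 4) :=
        ENNReal.tsum_le_tsum fun y => measure_mono <| ball_subset_ball' <| by
          linarith [hz w y y.2, dist_comm (z w y) (w : X), y.2.2]
    _ = ((netGraph G).neighborSet w).encard * μ (ball (w : X) 4) := ENNReal.tsum_set_const _ _

section LocallyDoubling

variable [OpensMeasurableSpace X] (hdbl : IsLocallyDoubling μ L) (hgeo : IsGeodesicSpace X)
  (hpos : ∀ (x : X) (r : ℝ), 0 < r → 0 < μ (ball x r))
  (hfin : ∀ (x : X) (r : ℝ), 0 < r → μ (ball x r) < ⊤)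
include hdbl hgeo hpos hfin

theorem IsLocallyDoubling.encard_inter_ball_le {δ : ℝ≥0} (hδ₀ : 0 < δ) (hδ : δ ≤ 1 / 4)
    {H : Set X} (hH : IsSeparated δ H) (p : X) :
    ((H ∩ ball p (4 * δ)).encard : ℝ≥0∞) ≤ L ^ 12 := by
  set S := H ∩ ball p (4 * δ)
  have hδ' : (δ : ℝ) ≤ 1 / 4 := by exact_mod_cast hδ
  have hr : (0 : ℝ) < δ / 2 := by positivity
  have hdisj : Pairwise (Disjoint on fun q : S => ball (q : X) (δ / 2)) := fun a b hab =>
    ball_disjoint_ball (by linarith [hH.lt_dist a.2.1 b.2.1 (Subtype.coe_ne_coe.2 hab)])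
  have hsub : (⋃ q : S, ball (q : X) (δ / 2)) ⊆ ball p (2 ^ 4 * (δ / 2)) :=
    iUnion_subset fun q => ball_subset_ball' (by linarith [mem_ball.1 q.2.2])
  have hcmp : ∀ q : S, μ (ball p (δ / 2)) ≤ L ^ 8 * μ (ball (q : X) (δ / 2)) := fun q =>
    hdbl.measure_ball_le_pow_mul hgeo hr (by linarith) 8 (by
      push_cast; linarith [mem_ball.1 q.2.2])
  have hkey : (S.encard : ℝ≥0∞) * μ (ball p (δ / 2)) ≤ L ^ 12 * μ (ball p (δ / 2)) :=
    calc (S.encard : ℝ≥0∞) * μ (ball p (δ / 2)) = ∑' _ : S, μ (ball p (δ / 2)) :=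
          (ENNReal.tsum_set_const _ _).symm
      _ ≤ ∑' q : S, L ^ 8 * μ (ball (q : X) (δ / 2)) := ENNReal.tsum_le_tsum hcmp
      _ = L ^ 8 * ∑' q : S, μ (ball (q : X) (δ / 2)) := ENNReal.tsum_mul_left
      _ ≤ L ^ 8 * μ (ball p (2 ^ 4 * (δ / 2))) := by
          gcongr
          exact (tsum_meas_le_meas_iUnion_of_disjoint μ (fun _ => measurableSet_ball)
            hdisj).trans (measure_mono hsub)
      _ ≤ L ^ 8 * (L ^ 4 * μ (ball p (δ / 2))) := by
          gcongr
          exact hdbl.measure_ball_two_pow_mul_le p hr 4 (by linarith)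
      _ = L ^ 12 * μ (ball p (δ / 2)) := by ring
  exact (ENNReal.mul_le_mul_iff_left (hpos p _ hr).ne' (hfin p _ hr).ne).1 hkey

theorem IsLocallyDoubling.encard_inter_ball_le_pow {δ : ℝ≥0} (hδ₀ : 0 < δ)
    (hδ : δ ≤ 1 / 4) {H : Set X} (hH : IsSeparated δ H) (hcov : IsCover δ univ H) (p : X)
    (n : ℕ) : ((H ∩ ball p ((n + 2) * δ)).encard : ℝ≥0∞) ≤ L ^ (12 * (n + 1)) := by
  have hloc := hdbl.encard_inter_ball_le hgeo hpos hfin hδ₀ hδ hH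
  induction n with
  | zero =>
    refine le_trans (ENat.toENNReal_le.2 (encard_mono ?_)) (hloc p)
    exact inter_subset_inter_right _ (ball_subset_ball (by push_cast; linarith [δ.2]))
  | succ n ih =>
    set S := H ∩ ball p (((n + 1 : ℕ) + 2) * δ)
    set T := H ∩ ball p ((n + 2) * δ)
    have hnear : ∀ g : S, ∃ q : T, dist (q : X) g ≤ 3 * δ := fun g => by
      have hg := mem_ball'.1 g.2.2
      push_cast at hg
      obtain ⟨q, hqH, hpq, hqg⟩ := hgeo.exists_mem_dist_lt hδ₀ hcov (R := (n + 2) * δ)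
        (by nlinarith [δ.2, (n.cast_nonneg : (0 : ℝ) ≤ n)]) (by linarith)
      exact ⟨⟨q, hqH, mem_ball'.2 hpq⟩, hqg⟩
    choose φ hφ using hnear
    have hfiber : ∀ q : T, ((φ ⁻¹' {q}).encard : ℝ≥0∞) ≤ L ^ 12 := fun q => by
      refine (toENNReal_encard_le_of_mapsTo_val (t := H ∩ ball (q : X) (4 * δ))
        fun g hg => ⟨g.2.1, ?_⟩).trans (hloc q)
      rw [mem_ball, ← show φ g = q from hg]
      linarith [hφ g, dist_comm (g : X) (φ g : X), δ.2]
    calc (S.encard : ℝ≥0∞) = ∑' g : S, (fun _ : T => (1 : ℝ≥0∞)) (φ g) :=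
          (ENNReal.tsum_set_one S).symm
      _ ≤ L ^ 12 * ∑' _ : T, 1 := ENNReal.tsum_comp_le_mul_tsum φ _ hfiber
      _ ≤ L ^ 12 * L ^ (12 * (n + 1)) := by rw [ENNReal.tsum_set_one]; gcongr
      _ = L ^ (12 * (n + 1 + 1)) := by ring

theorem IsLocallyDoubling.exists_encard_inter_ball_le (hL : L ≠ ⊤) {ε : ℝ≥0} (hε : 0 < ε)
    {S : Set X} (hS : IsSeparated ε S) (R : ℝ) :
    ∃ N : ℝ≥0, ∀ p, ((S ∩ ball p R).encard : ℝ≥0∞) ≤ N := by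
  set δ : ℝ≥0 := min ε (1 / 4)
  have hδ₀ : 0 < δ := lt_min hε (by norm_num)
  obtain ⟨H, hSH, hH, hcov⟩ :=
    (hS.anti (ENNReal.coe_le_coe.2 (min_le_left ε (1 / 4)))).exists_superset_isCover
  set n := ⌈R / δ⌉₊
  refine ⟨(L ^ (12 * (n + 1))).toNNReal, fun p => ?_⟩
  rw [ENNReal.coe_toNNReal (ENNReal.pow_ne_top hL)]
  refine le_trans (ENat.toENNReal_le.2 (encard_mono (inter_subset_inter hSH (ball_subset_ball ?_))))
    (hdbl.encard_inter_ball_le_pow hgeo hpos hfin hδ₀ (min_le_right _ _) hH hcov p n)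
  have hn := Nat.le_ceil (R / δ)
  rw [div_le_iff₀ (by exact_mod_cast hδ₀)] at hn
  linarith [δ.2]

theorem IsLocallyDoubling.exists_measure_ball_le_mul (hL : L ≠ ⊤) (R : ℝ) {r : ℝ} (hr : 0 < r) :
    ∃ C : ℝ≥0, ∀ p, μ (ball p R) ≤ C * μ (ball p r) := by
  set δ : ℝ≥0 := min (r / 2).toNNReal (1 / 4)
  have hδ₀ : 0 < δ := lt_min (by simpa using hr) (by norm_num)
  have hδr : (δ : ℝ) ≤ r / 2 :=
    (NNReal.coe_le_coe.2 (min_le_left _ _)).trans (Real.coe_toNNReal _ (by positivity)).le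
  have hδ : (δ : ℝ) ≤ 1 / 4 := by exact_mod_cast min_le_right (r / 2).toNNReal (1 / 4)
  obtain ⟨H, -, hH, hcov⟩ := (IsSeparated.empty (ε := δ) (X := X)).exists_superset_isCover
  obtain ⟨N, hN⟩ := hdbl.exists_encard_inter_ball_le hgeo hpos hfin hL hδ₀ hH (R + δ)
  set n := ⌈(R + δ) / (2 * δ)⌉₊
  refine ⟨N * (L ^ n).toNNReal, fun p => ?_⟩
  set S := H ∩ ball p (R + δ)
  have hcover : ball p R ⊆ ⋃ q ∈ S, ball q (2 * δ) := fun x hx => by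
    obtain ⟨q, hqH, hxq⟩ := hcov.exists_dist_le (mem_univ x)
    refine mem_biUnion (x := q) ⟨hqH, mem_ball.2 ?_⟩ (mem_ball.2 ?_)
    · linarith [mem_ball.1 hx, dist_triangle q x p, dist_comm q x]
    · linarith [NNReal.coe_pos.2 hδ₀]
  have hcmp : ∀ q ∈ S, μ (ball q (2 * δ)) ≤ L ^ n * μ (ball p r) := fun q hq => by
    refine (hdbl.measure_ball_le_pow_mul hgeo (by positivity) (by linarith) n ?_).trans
      (by gcongr; linarith)
    have hn := Nat.le_ceil ((R + δ) / (2 * δ))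
    rw [div_le_iff₀ (by positivity)] at hn
    linarith [mem_ball'.1 hq.2]
  calc μ (ball p R) ≤ μ (⋃ q ∈ S, ball q (2 * δ)) := measure_mono hcover
    _ ≤ ∑' q : S, μ (ball (q : X) (2 * δ)) :=
        measure_biUnion_le μ (Set.finite_of_toENNReal_encard_le (hN p)).countable _
    _ ≤ ∑' _ : S, L ^ n * μ (ball p r) := ENNReal.tsum_le_tsum fun q => hcmp q q.2
    _ = S.encard * (L ^ n * μ (ball p r)) := ENNReal.tsum_set_const _ _
    _ ≤ N * (L ^ n * μ (ball p r)) := by gcongr; exact hN p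
    _ = ↑(N * (L ^ n).toNNReal) * μ (ball p r) := by
        rw [ENNReal.coe_mul, ENNReal.coe_toNNReal (ENNReal.pow_ne_top hL), mul_assoc]

variable {G : Set X}

theorem IsLocallyDoubling.exists_encard_netGraph_ball_le (hL : L ≠ ⊤) (hG : MaximalSeparated G)
    (k : ℕ) :
    ∃ M : ℝ≥0, ∀ x : G, ({y | (netGraph G).dist x y ≤ k}.encard : ℝ≥0∞) ≤ M := by
  obtain ⟨M, hM⟩ := hdbl.exists_encard_inter_ball_le hgeo hpos hfin hL (by norm_num)
    hG.isSeparated (3 * k + 1)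
  refine ⟨M, fun x => (toENNReal_encard_le_of_mapsTo_val (t := G ∩ ball (x : X) (3 * k + 1))
    fun y hy => ⟨y.2, ?_⟩).trans (hM x)⟩
  have hk : ((netGraph G).dist x y : ℝ) ≤ k := by exact_mod_cast hy
  rw [mem_ball, dist_comm]
  linarith [dist_le_three_mul_netGraph_dist hgeo hG.2 x y]

theorem IsLocallyDoubling.exists_netNuV_le_mul_netNuE (hL : L ≠ ⊤) (hG : MaximalSeparated G)
    {z : X → X → X}
    (hz : ∀ x y : G, (netGraph G).Adj x y → dist (x : X) (z x y) = dist (x : X) y / 2) (D : ℝ) :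
    ∃ c : ℝ≥0, ∀ w p q : G, (netGraph G).Adj p q → dist (w : X) p ≤ D →
      netNuV μ G z w ≤ c * netNuE μ G z p q := by
  obtain ⟨N, hN⟩ := hdbl.exists_encard_inter_ball_le hgeo hpos hfin hL (by norm_num)
    hG.isSeparated 4
  obtain ⟨C, hC⟩ := hdbl.exists_measure_ball_le_mul hgeo hpos hfin hL (D + 11 / 2)
    (r := 5 / 2) (by norm_num)
  refine ⟨N * C, fun w p q hpq hwp => ?_⟩
  have hnbr : (((netGraph G).neighborSet w).encard : ℝ≥0∞) ≤ N := by
    refine (toENNReal_encard_le_of_mapsTo_val (t := G ∩ ball (w : X) 4)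
      fun y hy => ⟨y.2, mem_ball.2 ?_⟩).trans (hN w)
    linarith [hy.2, dist_comm (y : X) w]
  have hball : ball (w : X) 4 ⊆ ball (z p q) (D + 11 / 2) := ball_subset_ball' <| by
    linarith [dist_triangle (z p q) p w, hz p q hpq, dist_comm (z p q) (p : X), hpq.2,
      dist_comm (p : X) w, dist_comm (w : X) (z p q)]
  calc netNuV μ G z w ≤ ((netGraph G).neighborSet w).encard * μ (ball (w : X) 4) :=
        netNuV_le_encard_mul hz w
    _ ≤ N * (C * μ (ball (z p q) (5 / 2))) := mul_le_mul' hnbr ((measure_mono hball).trans (hC _))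
    _ = ↑(N * C) * netNuE μ G z p q := by rw [netNuE, if_pos hpq, ENNReal.coe_mul, mul_assoc]

theorem IsLocallyDoubling.exists_sq_netV_mul_netNuV_le (hL : L ≠ ⊤) (hG : MaximalSeparated G)
    {z : X → X → X}
    (hz : ∀ x y : G, (netGraph G).Adj x y → dist (x : X) (z x y) = dist (x : X) y / 2) :
    ∃ C : ℝ≥0, ∀ (f : G → ℝ) (w : G), ∃ p q : G,
      (netGraph G).dist w p ≤ 4 ∧ (netGraph G).dist w q ≤ 4 ∧
      ENNReal.ofReal (netV G 4 f w ^ 2) * netNuV μ G z w ≤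
        C * (ENNReal.ofReal ((f p - f q) ^ 2) * netNuE μ G z p q) := by
  obtain ⟨c, hc⟩ := hdbl.exists_netNuV_le_mul_netNuE hgeo hpos hfin hL hG hz 12
  obtain ⟨M, hM⟩ := hdbl.exists_encard_netGraph_ball_le hgeo hpos hfin hL hG 4
  refine ⟨16 * c, fun f w => ?_⟩
  obtain ⟨y, hy, hVy⟩ := exists_netV_eq 4 f w (Set.finite_of_toENNReal_encard_le (hM w))
  rcases eq_or_ne w y with rfl | hwy
  · exact ⟨w, w, by simp, by simp, by simp [hVy]⟩
  obtain ⟨P, hP⟩ := (netGraph_preconnected hgeo hG.2 w y).exists_walk_length_eq_dist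
  obtain ⟨d, hd, hle⟩ := P.exists_mem_darts_abs_sub_le f hwy
  have hnear : ∀ x ∈ P.support, (netGraph G).dist w x ≤ 4 := fun x hx =>
    (P.dist_le_length_of_mem_support hx).trans (hP ▸ hy)
  have hp := hnear _ (P.dart_fst_mem_support_of_mem_darts hd)
  refine ⟨d.fst, d.snd, hp, hnear _ (P.dart_snd_mem_support_of_mem_darts hd), ?_⟩
  have hsq : netV G 4 f w ^ 2 ≤ 16 * (f d.fst - f d.snd) ^ 2 := by
    have hlen : (P.length : ℝ) ≤ 4 := by exact_mod_cast hP ▸ hy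
    calc netV G 4 f w ^ 2 ≤ (4 * |f d.fst - f d.snd|) ^ 2 := by
          rw [hVy]
          exact pow_le_pow_left₀ (abs_nonneg _) (hle.trans (by gcongr)) 2
      _ = 16 * (f d.fst - f d.snd) ^ 2 := by rw [mul_pow, sq_abs]; norm_num
  have hwp : dist (w : X) d.fst ≤ 12 := by
    have : ((netGraph G).dist w d.fst : ℝ) ≤ 4 := by exact_mod_cast hp
    linarith [dist_le_three_mul_netGraph_dist hgeo hG.2 w d.fst]
  calc ENNReal.ofReal (netV G 4 f w ^ 2) * netNuV μ G z w
      ≤ ENNReal.ofReal (16 * (f d.fst - f d.snd) ^ 2) * (c * netNuE μ G z d.fst d.snd) :=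
        mul_le_mul' (ENNReal.ofReal_le_ofReal hsq) (hc w _ _ d.adj hwp)
    _ = ↑(16 * c) * (ENNReal.ofReal ((f d.fst - f d.snd) ^ 2) * netNuE μ G z d.fst d.snd) := by
        rw [ENNReal.ofReal_mul (by norm_num), ENNReal.coe_mul]
        norm_num
        ring

end LocallyDoubling

end

theorem net_oscillation_estimate_general {X : Type*} [MetricSpace X]
    [MeasurableSpace X] [BorelSpace X] (μ : Measure X)
    (hgeo : IsGeodesicSpace X)
    (hpos : ∀ (x : X) (r : ℝ), 0 < r → 0 < μ (Metric.ball x r))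
    (hfin : ∀ (x : X) (r : ℝ), 0 < r → μ (Metric.ball x r) < ⊤)
    (C_L : ℝ)
    (hVDloc : ∀ (x : X) (R : ℝ), 0 < R → R ≤ 1 →
      μ (Metric.ball x (2 * R)) ≤ ENNReal.ofReal C_L * μ (Metric.ball x R))
    (G : Set X) (hG : MaximalSeparated G)
    (z : X → X → X)
    (hz : ∀ x y : G, (netGraph G).Adj x y →
      dist (x : X) (z (x : X) (y : X)) = dist (x : X) (y : X) / 2 ∧
        dist (z (x : X) (y : X)) (y : X) = dist (x : X) (y : X) / 2) :
    ∃ c₁ : ℝ, 0 < c₁ ∧ ∀ (f : G → ℝ), (∀ x : G, 0 ≤ f x) → ∀ A : Set G,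
      (∑' w : A, ENNReal.ofReal ((netV G 4 f (w : G)) ^ 2) * netNuV μ G z (w : G)) ≤
        ENNReal.ofReal c₁ *
          ∑' y : {y : G | ∃ w ∈ A, (netGraph G).dist y w ≤ 4},
            ∑' w : {y : G | ∃ w ∈ A, (netGraph G).dist y w ≤ 4},
              ENNReal.ofReal ((f (y : G) - f (w : G)) ^ 2) *
                netNuE μ G z (y : G) (w : G) := by
  have hdbl : IsLocallyDoubling μ (ENNReal.ofReal C_L) := hVDloc
  obtain ⟨C, hC⟩ := hdbl.exists_sq_netV_mul_netNuV_le hgeo hpos hfin ENNReal.ofReal_ne_top hG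
    fun x y h => (hz x y h).1
  obtain ⟨M, hM⟩ := hdbl.exists_encard_netGraph_ball_le hgeo hpos hfin ENNReal.ofReal_ne_top hG 4
  refine ⟨(M * C : ℝ≥0) + 1, by positivity, fun f _ A => ?_⟩
  set A' := {y : G | ∃ w ∈ A, (netGraph G).dist y w ≤ 4}
  set t : A' × A' → ℝ≥0∞ := fun e => ENNReal.ofReal ((f e.1 - f e.2) ^ 2) * netNuE μ G z e.1 e.2
  have hedge : ∀ w : A, ∃ e : A' × A', (netGraph G).dist (e.1 : G) w ≤ 4 ∧
      ENNReal.ofReal (netV G 4 f w ^ 2) * netNuV μ G z w ≤ C * t e := fun w => by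
    obtain ⟨p, q, hp, hq, hle⟩ := hC f w
    rw [SimpleGraph.dist_comm] at hp hq
    exact ⟨(⟨p, w, w.2, hp⟩, ⟨q, w, w.2, hq⟩), hp, hle⟩
  choose e he using hedge
  have hfiber : ∀ b, ((e ⁻¹' {b}).encard : ℝ≥0∞) ≤ M := fun b => by
    refine (toENNReal_encard_le_of_mapsTo_val (t := {y | (netGraph G).dist (b.1 : G) y ≤ 4})
      fun w hw => ?_).trans (hM b.1)
    rw [mem_preimage, mem_singleton_iff] at hw
    simpa [hw, SimpleGraph.dist_comm] using (he w).1
  calc ∑' w : A, ENNReal.ofReal (netV G 4 f w ^ 2) * netNuV μ G z w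
      ≤ ∑' w : A, C * t (e w) := ENNReal.tsum_le_tsum fun w => (he w).2
    _ ≤ C * (M * ∑' b, t b) := by
        rw [ENNReal.tsum_mul_left]
        gcongr
        exact ENNReal.tsum_comp_le_mul_tsum e t hfiber
    _ ≤ ENNReal.ofReal ((M * C : ℝ≥0) + 1) * ∑' b, t b := by
        rw [← mul_assoc, mul_comm (C : ℝ≥0∞), ← ENNReal.coe_mul, ← ENNReal.ofReal_coe_nnreal]
        gcongr
        linarith
    _ = _ := congrArg _ (ENNReal.tsum_prod (f := fun y w : A' => t (y, w)))

/-- Under local volume doubling: `Σ_{z∈A} V₄f(z)² ν_z ≤ c₁ Σ_{y,z∈A'} (f(y)-f(z))² ν_{yz}`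
where `A' = {y : d_G(y,A) ≤ 4}`. -/
theorem net_oscillation_estimate {X : Type*} [MetricSpace X] [ConnectedSpace X]
    [CompleteSpace X] [LocallyCompactSpace X] [TopologicalSpace.SeparableSpace X]
    [MeasurableSpace X] [BorelSpace X] (μ : Measure X)
    (hgeo : IsGeodesicSpace X)
    (hpos : ∀ (x : X) (r : ℝ), 0 < r → 0 < μ (Metric.ball x r))
    (hfin : ∀ (x : X) (r : ℝ), 0 < r → μ (Metric.ball x r) < ⊤)
    (C_L : ℝ) (hCL : 0 < C_L)
    (hVDloc : ∀ (x : X) (R : ℝ), 0 < R → R ≤ 1 →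
      μ (Metric.ball x (2 * R)) ≤ ENNReal.ofReal C_L * μ (Metric.ball x R))
    (G : Set X) (hG : MaximalSeparated G)
    (z : X → X → X) (hzsymm : ∀ a b : X, z a b = z b a)
    (hz : ∀ x y : G, (netGraph G).Adj x y →
      dist (x : X) (z (x : X) (y : X)) = dist (x : X) (y : X) / 2 ∧
        dist (z (x : X) (y : X)) (y : X) = dist (x : X) (y : X) / 2) :
    ∃ c₁ : ℝ, 0 < c₁ ∧ ∀ (f : G → ℝ), (∀ x : G, 0 ≤ f x) → ∀ A : Set G,
      (∑' w : A, ENNReal.ofReal ((netV G 4 f (w : G)) ^ 2) * netNuV μ G z (w : G)) ≤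
        ENNReal.ofReal c₁ *
          ∑' y : {y : G | ∃ w ∈ A, (netGraph G).dist y w ≤ 4},
            ∑' w : {y : G | ∃ w ∈ A, (netGraph G).dist y w ≤ 4},
              ENNReal.ofReal ((f (y : G) - f (w : G)) ^ 2) *
                netNuE μ G z (y : G) (w : G) :=
  net_oscillation_estimate_general μ hgeo hpos hfin C_L hVDloc G hG z hz
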